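/- Let f : {0,1}^n × {0,1}^n → {0,1} be injective for Bob, i.e., for every pair y ≠ y' in {0,1}^n there exists x ∈ {0,1}^n with f(x,y) ≠ f(x,y'). Then the garden-hose complexity s = GH(f) satisfies s · log₂(s) ≥ n. Likewise, if f is injective for Alice (for every x ≠ x' there exists y with f(x,y) ≠ f(x',y)), then (s+1) · log₂(s+1) ≥ n. -/

import Mathlib

/-- A partial matching on the vertex type `V`, encoded by a partner function:
`m i = some j` means that there is an edge between `i` and `j`;
the graph `{ {i,j} | m i = some j }` then has maximum degree at most `1`
and no self-loops. -/
def IsPartialMatching {V : Type*} (m : V → Option V) : Prop :=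
  ∀ i j, m i = some j → i ≠ j ∧ m j = some i

/-- The position of the water in a garden-hose game with `s` pipes:
`atAlice i` (resp. `atBob i`) means the water has just arrived at Alice's
(resp. Bob's) end of pipe `i`; `exitA` / `exitB` mean the water has exited
on Alice's / Bob's side, i.e. the maximal path starting at the tap has ended
in `A∘` / in `B`. -/
inductive GHState (s : ℕ) where
  | atAlice : Fin s → GHState s
  | atBob : Fin s → GHState s
  | exitA : GHState s
  | exitB : GHState s
  deriving DecidableEq

/-- Vertex `k` of `A∘ = {0, 1, ..., s}` viewed as a pipe: vertex `0` is the water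
tap (no pipe), and vertex `i + 1` is Alice's end of pipe `i`. -/
def toPipe {s : ℕ} (k : Fin (s + 1)) : Option (Fin s) :=
  if h : (k : ℕ) = 0 then none
  else some ⟨(k : ℕ) - 1, by have := k.isLt; omega⟩

/-- One step of the water flow, given Alice's connections `a` on `A∘ = {0,...,s}`
and Bob's connections `b` on `B = {1,...,s}` (indexed by pipes `Fin s`). -/
def ghStep {s : ℕ} (a : Fin (s + 1) → Option (Fin (s + 1)))
    (b : Fin s → Option (Fin s)) : GHState s → GHState s
  | GHState.atAlice i =>
    match a i.succ with
    | none => GHState.exitA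
    | some k =>
      match toPipe k with
      | none => GHState.exitA
      | some p => GHState.atBob p
  | GHState.atBob i =>
    match b i with
    | none => GHState.exitB
    | some j => GHState.atAlice j
  | GHState.exitA => GHState.exitA
  | GHState.exitB => GHState.exitB

/-- The start of the water flow: the tap (vertex `0` of `A∘`) is connected by
Alice to at most one pipe. -/
def ghStart {s : ℕ} (a : Fin (s + 1) → Option (Fin (s + 1))) : GHState s :=
  match a 0 with
  | none => GHState.exitA
  | some k =>
    match toPipe k with
    | none => GHState.exitA
    | some p => GHState.atBob p

/-- The endpoint of the maximal path `π(x,y)` starting at the tap: since the graph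
has maximum degree `2` and the path is simple, it is reached after at most
`2s + 2` steps. -/
def ghResult {s : ℕ} (a : Fin (s + 1) → Option (Fin (s + 1)))
    (b : Fin s → Option (Fin s)) : GHState s :=
  (ghStep a b)^[2 * s + 2] (ghStart a)

/-- A garden-hose game of size `s` on inputs `{0,1}^n × {0,1}^n`: for every input
`x` Alice chooses a partial matching `EA x` on `A∘ = {0,1,…,s}` and for every
input `y` Bob chooses a partial matching `EB y` on `B = {1,…,s}`. -/
structure GHGame (n s : ℕ) where
  EA : (Fin n → Bool) → Fin (s + 1) → Option (Fin (s + 1))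
  EB : (Fin n → Bool) → Fin s → Option (Fin s)
  matchA : ∀ x, IsPartialMatching (EA x)
  matchB : ∀ y, IsPartialMatching (EB y)

/-- Where the water exits on input `(x, y)`. -/
def GHGame.run {n s : ℕ} (G : GHGame n s) (x y : Fin n → Bool) : GHState s :=
  ghResult (G.EA x) (G.EB y)

/-- The game `G` computes `f` if for all inputs the maximal path from the tap ends
in `A∘` whenever `f x y = 0` (water exits on Alice's side) and in `B` whenever
`f x y = 1` (water exits on Bob's side). -/
def GHGame.Computes {n s : ℕ} (G : GHGame n s)
    (f : (Fin n → Bool) → (Fin n → Bool) → Bool) : Prop :=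
  ∀ x y, G.run x y = if f x y then GHState.exitB else GHState.exitA

/-- The garden-hose complexity of `f`: the minimal number of pipes of a
garden-hose game computing `f`. -/
noncomputable def GH {n : ℕ} (f : (Fin n → Bool) → (Fin n → Bool) → Bool) : ℕ :=
  sInf {s : ℕ | ∃ G : GHGame n s, G.Computes f}

/-- `f` is injective for Bob: for every `y ≠ y'` there is `x` with
`f x y ≠ f x y'`. -/
def InjectiveForBob {n : ℕ}
    (f : (Fin n → Bool) → (Fin n → Bool) → Bool) : Prop :=
  ∀ y y' : Fin n → Bool, y ≠ y' → ∃ x, f x y ≠ f x y'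

/-- `f` is injective for Alice: for every `x ≠ x'` there is `y` with
`f x y ≠ f x' y`. -/
def InjectiveForAlice {n : ℕ}
    (f : (Fin n → Bool) → (Fin n → Bool) → Bool) : Prop :=
  ∀ x x' : Fin n → Bool, x ≠ x' → ∃ y, f x y ≠ f x' y

/-! A game computes `f` only through the pair of matchings `(EA x, EB y)`, so an `f` that is
injective for Bob (resp. Alice) forces `y ↦ EB y` (resp. `x ↦ EA x`) to be injective. A partial
matching on `k` vertices is a fixed-point-free map `V → Option V`, and there are only `k ^ k` of
those; hence `2 ^ n ≤ k ^ k`, i.e. `n ≤ k log₂ k`, with `k = s` for Bob and `k = s + 1` for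
Alice. -/

open Function

section PartialMatching

variable {V : Type*}

theorem IsPartialMatching.ne_some_self {m : V → Option V} (hm : IsPartialMatching m) (v : V) :
    m v ≠ some v :=
  fun h => (hm v v h).1 rfl

theorem isPartialMatching_edge [DecidableEq V] {u v : V} (huv : u ≠ v) :
    IsPartialMatching fun k => if k = u then some v else if k = v then some u else none := by
  intro i j h
  dsimp only at h ⊢
  split_ifs at h <;> grind

theorem isPartialMatching_ite_involutive (p : V → Prop) [DecidablePred p] {σ : V → V}
    (hσ : Involutive σ) (hfix : ∀ v, σ v ≠ v) (hp : ∀ v, p (σ v) ↔ p v) :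
    IsPartialMatching fun v => if p v then some (σ v) else none := by
  intro i j h
  dsimp only at h ⊢
  split_ifs at h with hi
  cases h
  exact ⟨(hfix i).symm, by simp [hp, hi, hσ i]⟩

theorem card_fixedPointFree_option [Fintype V] [DecidableEq V] :
    Fintype.card {m : V → Option V // ∀ v, m v ≠ some v} = Fintype.card V ^ Fintype.card V := by
  rw [Fintype.card_congr (Equiv.subtypePiEquivPi (p := fun v o => o ≠ some v)),
    Fintype.card_pi]
  have hcard (v : V) : Fintype.card {o : Option V // o ≠ some v} = Fintype.card V := by
    rw [Fintype.card_subtype_compl, Fintype.card_subtype_eq, Fintype.card_option]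
    omega
  simp [hcard]

theorem card_le_pow_of_injective_partialMatching {ι : Type*} [Fintype ι] [Fintype V]
    [DecidableEq V] {g : ι → V → Option V} (hg : ∀ i, IsPartialMatching (g i))
    (hinj : Injective g) : Fintype.card ι ≤ Fintype.card V ^ Fintype.card V := by
  rw [← card_fixedPointFree_option]
  exact Fintype.card_le_of_injective (fun i => ⟨g i, (hg i).ne_some_self⟩)
    fun i j h => hinj (congrArg Subtype.val h)

end PartialMatching

theorem le_mul_logb_of_two_pow_le_pow_self {n m : ℕ} (h : 2 ^ n ≤ m ^ m) :
    (n : ℝ) ≤ m * Real.logb 2 m := by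
  have h' : (2 : ℝ) ^ n ≤ (m : ℝ) ^ m := by exact_mod_cast h
  calc (n : ℝ) = Real.logb 2 (2 ^ n) := by simp [Real.logb_pow]
    _ ≤ Real.logb 2 (m ^ m) := Real.logb_le_logb_of_le one_lt_two (by positivity) h'
    _ = m * Real.logb 2 m := Real.logb_pow ..

theorem toPipe_succ {s : ℕ} (p : Fin s) : toPipe p.succ = some p := by
  simp [toPipe]

namespace GHGame

variable {n : ℕ} {f : (Fin n → Bool) → (Fin n → Bool) → Bool}

section Computes

variable {s : ℕ} {G : GHGame n s}

theorem Computes.eq_of_EA_eq_of_EB_eq (hG : G.Computes f) {x x' y y' : Fin n → Bool}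
    (hA : G.EA x = G.EA x') (hB : G.EB y = G.EB y') : f x y = f x' y' := by
  have hrun : G.run x y = G.run x' y' := by rw [run, run, hA, hB]
  rw [hG x y, hG x' y'] at hrun
  revert hrun
  cases f x y <;> cases f x' y' <;> simp

theorem Computes.injective_EB (hG : G.Computes f) (hf : InjectiveForBob f) : Injective G.EB := by
  intro y y' h
  by_contra hne
  obtain ⟨x, hx⟩ := hf y y' hne
  exact hx (hG.eq_of_EA_eq_of_EB_eq rfl h)

theorem Computes.injective_EA (hG : G.Computes f) (hf : InjectiveForAlice f) :
    Injective G.EA := by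
  intro x x' h
  by_contra hne
  obtain ⟨y, hy⟩ := hf x x' hne
  exact hy (hG.eq_of_EA_eq_of_EB_eq h rfl)

end Computes

/-- Pipes are indexed by `Bool × {0,1}^n`. Alice sends the water from the tap into pipe
`(false, x)`; if `f x y = false`, Bob returns it through pipe `(true, x)`, whose end Alice
leaves open. -/
noncomputable def naive (f : (Fin n → Bool) → (Fin n → Bool) → Bool) :
    GHGame n (Fintype.card (Bool × (Fin n → Bool))) where
  EA x := fun k =>
    if k = 0 then some (Fintype.equivFin _ (false, x)).succ
    else if k = (Fintype.equivFin _ (false, x)).succ then some 0 else none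
  EB y := fun p =>
    if f ((Fintype.equivFin _).symm p).2 y = false then
      some (Fintype.equivFin _ (Prod.map not id ((Fintype.equivFin _).symm p)))
    else none
  matchA _ := isPartialMatching_edge (Fin.succ_ne_zero _).symm
  matchB y := isPartialMatching_ite_involutive _
    (fun p => by simp [Prod.map]) (fun p h => by simp [← Equiv.eq_symm_apply, Prod.ext_iff] at h) (by simp)

theorem naive_computes (f : (Fin n → Bool) → (Fin n → Bool) → Bool) : (naive f).Computes f := by
  intro x y
  set e := Fintype.equivFin (Bool × (Fin n → Bool))
  set step := ghStep ((naive f).EA x) ((naive f).EB y)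
  have hstart : ghStart ((naive f).EA x) = GHState.atBob (e (false, x)) := by
    simp [ghStart, naive, e, toPipe_succ]
  have htwo : step (step (GHState.atBob (e (false, x)))) =
      if f x y then GHState.exitB else GHState.exitA := by
    cases hf : f x y <;> simp [step, ghStep, naive, e, hf, Prod.map]
  have hexit : ∀ k, step^[k] (if f x y then GHState.exitB else GHState.exitA) =
      if f x y then GHState.exitB else GHState.exitA := by
    intro k
    split_ifs <;> exact iterate_fixed rfl k
  rw [run, ghResult, hstart, iterate_add_apply, iterate_succ_apply, iterate_one]
  change step^[_] (step (step _)) = _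
  rw [htwo, hexit]

theorem exists_computes_GH (f : (Fin n → Bool) → (Fin n → Bool) → Bool) :
    ∃ G : GHGame n (GH f), G.Computes f :=
  Nat.sInf_mem (s := {s | ∃ G : GHGame n s, G.Computes f}) ⟨_, naive f, naive_computes f⟩

end GHGame

/-- If `f` is injective for Bob then `s = GH f` satisfies `s · log₂ s ≥ n`;
if `f` is injective for Alice then `(s+1) · log₂ (s+1) ≥ n`. -/
theorem gh_lower_bound_of_injective (n : ℕ)
    (f : (Fin n → Bool) → (Fin n → Bool) → Bool) :
    (InjectiveForBob f →
      (n : ℝ) ≤ (GH f : ℝ) * Real.logb 2 (GH f)) ∧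
    (InjectiveForAlice f →
      (n : ℝ) ≤ ((GH f : ℝ) + 1) * Real.logb 2 ((GH f : ℝ) + 1)) := by
  obtain ⟨G, hG⟩ := GHGame.exists_computes_GH f
  refine ⟨fun hf => ?_, fun hf => ?_⟩
  · have hcard := card_le_pow_of_injective_partialMatching G.matchB (hG.injective_EB hf)
    simp only [Fintype.card_fun, Fintype.card_bool, Fintype.card_fin] at hcard
    exact le_mul_logb_of_two_pow_le_pow_self hcard
  · have hcard := card_le_pow_of_injective_partialMatching G.matchA (hG.injective_EA hf)
    simp only [Fintype.card_fun, Fintype.card_bool, Fintype.card_fin] at hcard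
    exact_mod_cast le_mul_logb_of_two_pow_le_pow_self hcard
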